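/- Inverse expansion of monomials: x^n = Σ_{k=0}^{⌊n/2⌋} (qs)^k qbinomial(n,2k) [2k−1]_q!! H_{n−2k}(x,s,q). -/

import Mathlib

/-!
The proof runs through the three-term recurrence `x H_n = H_{n+1} + s q^n [n]_q H_{n-1}`, which
holds coefficientwise by q-Pascal and the absorption identity `[n+1] [n choose k] =
[n+1 choose k+1] [k+1]`. Inverting such a family is a triangular induction: if `P_0 = 1` and
`x P_m = P_{m+1} + c_m P_{m-1}`, then `x^n = ∑ B(n,k) P_{n-2k}` for every `B` with `B(n,0) = 1`
and `B(n+1,k+1) = B(n,k+1) + c_{n-2k} B(n,k)` (multiply by `x`, apply the recurrence termwise and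
collect). For `c_m = s q^m [m]_q` the coefficients `(qs)^k [n choose 2k]_q [2k-1]_q!!` obey this
rule, again by q-Pascal and absorption.
-/

noncomputable section

/-- The q-integer `[n]_q = (1 - q^n)/(1 - q)`. -/
def qnat (q : ℝ) (n : ℕ) : ℝ := (1 - q ^ n) / (1 - q)

/-- The q-factorial `[n]_q!`. -/
def qfac (q : ℝ) (n : ℕ) : ℝ := ∏ j ∈ Finset.range n, qnat q (j + 1)

/-- The Gaussian binomial coefficient. -/
def qbinom (q : ℝ) (n k : ℕ) : ℝ := qfac q n / (qfac q k * qfac q (n - k))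

/-- The odd q-double factorial `[2k-1]_q!! = [1]_q [3]_q ⋯ [2k-1]_q`. -/
def qdf (q : ℝ) (k : ℕ) : ℝ := ∏ i ∈ Finset.range k, qnat q (2 * i + 1)

/-- The bivariate q-Hermite polynomial
`H n (x,s,q) = ∑_{2k ≤ n} (-s)^k q^(k²) qbinom(n,2k) [2k-1]_q!! x^(n-2k)`. -/
def qHermite (q s : ℝ) (n : ℕ) (x : ℝ) : ℝ :=
  ∑ k ∈ Finset.range (n / 2 + 1),
    (-s) ^ k * q ^ (k ^ 2) * qbinom q n (2 * k) * qdf q k * x ^ (n - 2 * k)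

end

open Finset

lemma qnat_zero (q : ℝ) : qnat q 0 = 0 := by simp [qnat]

lemma qnat_add {q : ℝ} (hq : q ≠ 1) (a b : ℕ) :
    qnat q (a + b) = qnat q a + q ^ a * qnat q b := by
  have : 1 - q ≠ 0 := sub_ne_zero.mpr hq.symm
  simp only [qnat]
  field_simp
  ring

lemma qnat_ne_zero {q : ℝ} (hq : ¬IsOfFinOrder q) {n : ℕ} (hn : n ≠ 0) : qnat q n ≠ 0 := by
  have hpow (m : ℕ) (hm : m ≠ 0) : 1 - q ^ m ≠ 0 :=
    sub_ne_zero.mpr fun h ↦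
      hq (isOfFinOrder_iff_pow_eq_one.mpr ⟨m, Nat.pos_of_ne_zero hm, h.symm⟩)
  exact div_ne_zero (hpow n hn) (by simpa using hpow 1 one_ne_zero)

lemma qfac_zero (q : ℝ) : qfac q 0 = 1 := prod_range_zero _

lemma qfac_succ (q : ℝ) (n : ℕ) : qfac q (n + 1) = qfac q n * qnat q (n + 1) :=
  prod_range_succ _ _

lemma qfac_ne_zero {q : ℝ} (hq : ¬IsOfFinOrder q) (n : ℕ) : qfac q n ≠ 0 :=
  prod_ne_zero_iff.mpr fun _ _ ↦ qnat_ne_zero hq (Nat.succ_ne_zero _)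

lemma qdf_succ (q : ℝ) (k : ℕ) : qdf q (k + 1) = qdf q k * qnat q (2 * k + 1) :=
  prod_range_succ _ _

/-- `qbinom q n k` takes junk values for `k > n`; extending it by zero there makes Pascal's rule
and the absorption identities hold for all indices. -/
noncomputable def qchoose (q : ℝ) (n k : ℕ) : ℝ := if k ≤ n then qbinom q n k else 0

lemma qchoose_of_lt {q : ℝ} {n k : ℕ} (h : n < k) : qchoose q n k = 0 := by
  simp [qchoose, h]

lemma qchoose_add_left (q : ℝ) (k m : ℕ) :
    qchoose q (k + m) k = qfac q (k + m) / (qfac q k * qfac q m) := by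
  rw [qchoose, if_pos (Nat.le_add_right k m), qbinom, Nat.add_sub_cancel_left]

lemma qchoose_zero_right {q : ℝ} (hq : ¬IsOfFinOrder q) (n : ℕ) : qchoose q n 0 = 1 := by
  rw [← zero_add n, qchoose_add_left, zero_add, qfac_zero, one_mul, div_self (qfac_ne_zero hq n)]

lemma qchoose_self {q : ℝ} (hq : ¬IsOfFinOrder q) (n : ℕ) : qchoose q n n = 1 := by
  simpa [qfac_zero, div_self (qfac_ne_zero hq n)] using qchoose_add_left q n 0

theorem qchoose_succ_succ {q : ℝ} (hq : ¬IsOfFinOrder q) (n k : ℕ) :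
    qchoose q (n + 1) (k + 1) = qchoose q n (k + 1) + q ^ (n - k) * qchoose q n k := by
  rcases lt_trichotomy k n with hkn | rfl | hnk
  · obtain ⟨m, rfl⟩ := Nat.exists_eq_add_of_lt hkn
    have h1 : qchoose q (k + m + 1 + 1) (k + 1) = qfac q (k + m + 1) * qnat q (m + 1 + (k + 1))
        / (qfac q k * qnat q (k + 1) * (qfac q m * qnat q (m + 1))) := by
      rw [show k + m + 1 + 1 = (k + 1) + (m + 1) by ring, qchoose_add_left, qfac_succ q k,
        qfac_succ q m, show k + 1 + (m + 1) = (k + m + 1) + 1 by ring, qfac_succ,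
        show k + m + 1 + 1 = m + 1 + (k + 1) by ring]
    have h2 : qchoose q (k + m + 1) (k + 1) = qfac q (k + m + 1)
        / (qfac q k * qnat q (k + 1) * qfac q m) := by
      rw [show k + m + 1 = (k + 1) + m by ring, qchoose_add_left, qfac_succ q k]
    have h3 : qchoose q (k + m + 1) k =
        qfac q (k + m + 1) / (qfac q k * (qfac q m * qnat q (m + 1))) := by
      rw [show k + m + 1 = k + (m + 1) by ring, qchoose_add_left, qfac_succ q m]
    rw [h1, h2, h3, show k + m + 1 - k = m + 1 by omega,
      qnat_add (by rintro rfl; exact hq IsOfFinOrder.one)]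
    have := qfac_ne_zero hq
    have := qnat_ne_zero hq (Nat.succ_ne_zero k)
    have := qnat_ne_zero hq (Nat.succ_ne_zero m)
    field_simp
  · rw [qchoose_self hq, qchoose_self hq, qchoose_of_lt (Nat.lt_succ_self k), Nat.sub_self]
    ring
  · rw [qchoose_of_lt (by omega), qchoose_of_lt (by omega), qchoose_of_lt hnk]
    ring

theorem qnat_succ_mul_qchoose {q : ℝ} (hq : ¬IsOfFinOrder q) (n k : ℕ) :
    qnat q (n + 1) * qchoose q n k = qchoose q (n + 1) (k + 1) * qnat q (k + 1) := by
  rcases le_or_gt k n with hkn | hnk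
  · obtain ⟨m, rfl⟩ := Nat.exists_eq_add_of_le hkn
    rw [show k + m + 1 = (k + 1) + m by ring, qchoose_add_left, qchoose_add_left, qfac_succ q k,
      show k + 1 + m = (k + m) + 1 by ring, qfac_succ q (k + m)]
    have := qfac_ne_zero hq
    have := qnat_ne_zero hq (Nat.succ_ne_zero k)
    field_simp
  · rw [qchoose_of_lt hnk, qchoose_of_lt (by omega)]
    ring

theorem qchoose_succ_right_mul_qnat {q : ℝ} (hq : ¬IsOfFinOrder q) (n k : ℕ) :
    qchoose q n (k + 1) * qnat q (k + 1) = qchoose q n k * qnat q (n - k) := by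
  rcases lt_or_ge k n with hkn | hnk
  · obtain ⟨m, rfl⟩ := Nat.exists_eq_add_of_lt hkn
    rw [show k + m + 1 = (k + 1) + m by ring, qchoose_add_left,
      show k + 1 + m = k + (m + 1) by ring, qchoose_add_left, Nat.add_sub_cancel_left,
      qfac_succ q k, qfac_succ q m]
    have := qfac_ne_zero hq
    have := qnat_ne_zero hq (Nat.succ_ne_zero k)
    have := qnat_ne_zero hq (Nat.succ_ne_zero m)
    field_simp
  · rw [qchoose_of_lt (by omega), Nat.sub_eq_zero_of_le hnk, qnat_zero]
    ring

theorem sum_range_div_two_succ_eq_sum_ite {M : Type*} [AddCommMonoid M] (f : ℕ → M) {n N : ℕ}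
    (hN : n / 2 < N) :
    ∑ k ∈ range (n / 2 + 1), f k = ∑ k ∈ range N, if 2 * k ≤ n then f k else 0 := by
  rw [sum_ite, sum_const_zero, add_zero]
  congr 1
  ext k
  simp only [mem_range, mem_filter]
  omega

section ThreeTermRecurrence

variable {R : Type*} [CommRing R] (x : R) (c : ℕ → R)

theorem mul_sum_mul_pow_sub_two_mul {A : ℕ → ℕ → R} (hA0 : ∀ n, A n 0 = 1)
    (hAz : ∀ n k, n < 2 * k → A n k = 0)
    (hA : ∀ n k, A (n + 1) (k + 1) + c n * A (n - 1) k = A n (k + 1)) {n N : ℕ}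
    (hN : n / 2 < N) :
    x * ∑ k ∈ range (N + 1), A n k * x ^ (n - 2 * k) =
      ∑ k ∈ range (N + 1), A (n + 1) k * x ^ (n + 1 - 2 * k) +
        c n * ∑ k ∈ range (N + 1), A (n - 1) k * x ^ (n - 1 - 2 * k) := by
  have hstep (k : ℕ) : x * (A n (k + 1) * x ^ (n - 2 * (k + 1))) =
      A (n + 1) (k + 1) * x ^ (n + 1 - 2 * (k + 1)) + c n * (A (n - 1) k * x ^ (n - 1 - 2 * k)) :=
    calc x * (A n (k + 1) * x ^ (n - 2 * (k + 1)))
        _ = A n (k + 1) * x ^ (n + 1 - 2 * (k + 1)) := by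
          rcases le_or_gt (2 * (k + 1)) n with h | h
          · rw [show n + 1 - 2 * (k + 1) = n - 2 * (k + 1) + 1 by omega, pow_succ]
            ring
          · rw [hAz n (k + 1) h, zero_mul, mul_zero, zero_mul]
        _ = _ := by
          rw [← hA n k, show n - 1 - 2 * k = n + 1 - 2 * (k + 1) by omega]
          ring
  rw [sum_range_succ' (fun k ↦ A n k * _), sum_range_succ' (fun k ↦ A (n + 1) k * _),
    sum_range_succ (fun k ↦ A (n - 1) k * _), hAz (n - 1) N (by omega), mul_add, mul_sum,
    sum_congr rfl fun k _ ↦ hstep k, sum_add_distrib, ← mul_sum, hA0, hA0]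
  simp only [mul_zero, Nat.sub_zero, pow_succ]
  ring

theorem pow_eq_sum_mul_of_recurrence {P : ℕ → R} {B : ℕ → ℕ → R} (hP0 : P 0 = 1)
    (hP : ∀ m, x * P m = P (m + 1) + c m * P (m - 1)) (hB0 : ∀ n, B n 0 = 1)
    (hBz : ∀ n k, n < 2 * k → B n k = 0)
    (hB : ∀ n k, B (n + 1) (k + 1) = B n (k + 1) + c (n - 2 * k) * B n k) (n : ℕ) :
    x ^ n = ∑ k ∈ range (n + 1), B n k * P (n - 2 * k) := by
  induction n with
  | zero => simp [hB0, hP0]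
  | succ n ih =>
    have hshift (k : ℕ) :
        B n (k + 1) * P (n - 2 * (k + 1) + 1) = B n (k + 1) * P (n - 2 * k - 1) := by
      rcases le_or_gt (2 * (k + 1)) n with h | h
      · rw [show n - 2 * (k + 1) + 1 = n - 2 * k - 1 by omega]
      · rw [hBz n (k + 1) h, zero_mul, zero_mul]
    calc x ^ (n + 1)
        = ∑ k ∈ range (n + 1), B n k * P (n - 2 * k + 1) +
            ∑ k ∈ range (n + 1), c (n - 2 * k) * B n k * P (n - 2 * k - 1) := by
          rw [pow_succ', ih, mul_sum, ← sum_add_distrib]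
          refine sum_congr rfl fun k _ ↦ ?_
          rw [mul_left_comm, hP]
          ring
      _ = B n 0 * P (n + 1) + ∑ k ∈ range (n + 1),
            (B n (k + 1) + c (n - 2 * k) * B n k) * P (n - 2 * k - 1) := by
          rw [sum_range_succ' _ n, sum_congr rfl fun k _ ↦ hshift k]
          simp only [add_mul, sum_add_distrib, sum_range_succ _ n, hBz n (n + 1) (by omega),
            mul_zero, Nat.sub_zero]
          ring
      _ = ∑ k ∈ range (n + 1 + 1), B (n + 1) k * P (n + 1 - 2 * k) := by
          rw [sum_range_succ' _ (n + 1), hB0, hB0]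
          have hidx (k : ℕ) : n + 1 - 2 * (k + 1) = n - 2 * k - 1 := by omega
          simp only [← hB, hidx, mul_zero, Nat.sub_zero]
          ring

end ThreeTermRecurrence

lemma not_isOfFinOrder_of_abs_lt_one {q : ℝ} (hq : |q| < 1) : ¬IsOfFinOrder q := by
  intro h
  obtain ⟨m, hm, hqm⟩ := h.exists_pow_eq_one
  have := pow_lt_one₀ (abs_nonneg q) hq hm.ne'
  rw [← abs_pow, hqm, abs_one] at this
  exact lt_irrefl 1 this

noncomputable def qHermiteCoeff (q s : ℝ) (n k : ℕ) : ℝ :=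
  (-s) ^ k * q ^ (k ^ 2) * qchoose q n (2 * k) * qdf q k

noncomputable def qHermiteInvCoeff (q s : ℝ) (n k : ℕ) : ℝ :=
  (q * s) ^ k * qchoose q n (2 * k) * qdf q k

section Coefficients

variable {q : ℝ} (s : ℝ)

lemma qHermiteCoeff_zero_right (hq : ¬IsOfFinOrder q) (n : ℕ) : qHermiteCoeff q s n 0 = 1 := by
  simp [qHermiteCoeff, qchoose_zero_right hq, qdf]

lemma qHermiteCoeff_of_lt {n k : ℕ} (h : n < 2 * k) : qHermiteCoeff q s n k = 0 := by
  simp [qHermiteCoeff, qchoose_of_lt h]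

lemma qHermiteInvCoeff_zero_right (hq : ¬IsOfFinOrder q) (n : ℕ) :
    qHermiteInvCoeff q s n 0 = 1 := by
  simp [qHermiteInvCoeff, qchoose_zero_right hq, qdf]

lemma qHermiteInvCoeff_of_lt {n k : ℕ} (h : n < 2 * k) : qHermiteInvCoeff q s n k = 0 := by
  simp [qHermiteInvCoeff, qchoose_of_lt h]

theorem qHermiteCoeff_succ_succ (hq : ¬IsOfFinOrder q) (n k : ℕ) :
    qHermiteCoeff q s (n + 1) (k + 1) + s * q ^ n * qnat q n * qHermiteCoeff q s (n - 1) k =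
      qHermiteCoeff q s n (k + 1) := by
  rcases le_or_gt n (2 * k) with h | h
  · rw [qHermiteCoeff_of_lt s (n := n + 1) (k := k + 1) (by omega),
      qHermiteCoeff_of_lt s (n := n) (k := k + 1) (by omega)]
    rcases Nat.eq_zero_or_pos n with rfl | hn
    · rw [qnat_zero]; ring
    · rw [qHermiteCoeff_of_lt s (n := n - 1) (by omega)]; ring
  · obtain ⟨m, rfl⟩ := Nat.exists_eq_add_of_lt h
    have hP : qchoose q (2 * k + m + 1 + 1) (2 * k + 2) = qchoose q (2 * k + m + 1) (2 * k + 2) +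
        q ^ m * qchoose q (2 * k + m + 1) (2 * k + 1) := by
      have := qchoose_succ_succ hq (2 * k + m + 1) (2 * k + 1)
      rwa [show 2 * k + m + 1 - (2 * k + 1) = m by omega] at this
    have hA := qnat_succ_mul_qchoose hq (2 * k + m) (2 * k)
    simp only [qHermiteCoeff, qdf_succ, mul_add, mul_one, Nat.add_sub_cancel]
    linear_combination (-s) ^ (k + 1) * q ^ ((k + 1) ^ 2) * qdf q k * qnat q (2 * k + 1) * hP
      - (-s) ^ (k + 1) * q ^ ((k + 1) ^ 2) * q ^ m * qdf q k * hA

theorem qHermiteInvCoeff_succ_succ (hq : ¬IsOfFinOrder q) (n k : ℕ) :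
    qHermiteInvCoeff q s (n + 1) (k + 1) = qHermiteInvCoeff q s n (k + 1) +
      s * q ^ (n - 2 * k) * qnat q (n - 2 * k) * qHermiteInvCoeff q s n k := by
  rcases lt_or_ge (2 * k) n with h | h
  · obtain ⟨m, rfl⟩ := Nat.exists_eq_add_of_lt h
    have hP : qchoose q (2 * k + m + 1 + 1) (2 * k + 2) = qchoose q (2 * k + m + 1) (2 * k + 2) +
        q ^ m * qchoose q (2 * k + m + 1) (2 * k + 1) := by
      have := qchoose_succ_succ hq (2 * k + m + 1) (2 * k + 1)
      rwa [show 2 * k + m + 1 - (2 * k + 1) = m by omega] at this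
    have hR := qchoose_succ_right_mul_qnat hq (2 * k + m + 1) (2 * k)
    simp only [qHermiteInvCoeff, qdf_succ, mul_add, mul_one,
      show 2 * k + m + 1 - 2 * k = m + 1 by omega] at hR ⊢
    linear_combination (q * s) ^ (k + 1) * qdf q k * qnat q (2 * k + 1) * hP
      + (q * s) ^ (k + 1) * q ^ m * qdf q k * hR
  · rw [Nat.sub_eq_zero_of_le h, qnat_zero, qHermiteInvCoeff_of_lt s (by omega),
      qHermiteInvCoeff_of_lt s (by omega)]
    ring

end Coefficients

lemma qHermite_eq_sum (q s x : ℝ) {n N : ℕ} (hN : n / 2 < N) :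
    qHermite q s n x = ∑ k ∈ range N, qHermiteCoeff q s n k * x ^ (n - 2 * k) := by
  rw [qHermite, sum_range_div_two_succ_eq_sum_ite _ hN]
  refine sum_congr rfl fun k _ ↦ ?_
  simp only [qHermiteCoeff, qchoose]
  split_ifs <;> simp

lemma qHermite_zero (q s x : ℝ) : qHermite q s 0 x = 1 := by
  simp [qHermite, qbinom, qfac, qdf]

theorem mul_qHermite {q : ℝ} (hq : ¬IsOfFinOrder q) (s x : ℝ) (n : ℕ) :
    x * qHermite q s n x =
      qHermite q s (n + 1) x + s * q ^ n * qnat q n * qHermite q s (n - 1) x := by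
  rw [qHermite_eq_sum q s x (n := n) (N := n + 2) (by omega),
    qHermite_eq_sum q s x (n := n + 1) (N := n + 2) (by omega),
    qHermite_eq_sum q s x (n := n - 1) (N := n + 2) (by omega)]
  exact mul_sum_mul_pow_sub_two_mul x (fun m ↦ s * q ^ m * qnat q m)
    (qHermiteCoeff_zero_right s hq) (fun _ _ ↦ qHermiteCoeff_of_lt s)
    (qHermiteCoeff_succ_succ s hq) (by omega)

theorem monomial_expansion_qHermite (q : ℝ) (hq : 0 < q) (hq1 : q < 1) (s x : ℝ) (n : ℕ) :
    x ^ n = ∑ k ∈ Finset.range (n / 2 + 1),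
      (q * s) ^ k * qbinom q n (2 * k) * qdf q k * qHermite q s (n - 2 * k) x := by
  have hfin := not_isOfFinOrder_of_abs_lt_one (abs_lt.mpr ⟨by linarith, hq1⟩)
  rw [sum_range_div_two_succ_eq_sum_ite _ (Nat.lt_succ_of_le (Nat.div_le_self n 2)),
    pow_eq_sum_mul_of_recurrence x (fun m ↦ s * q ^ m * qnat q m) (qHermite_zero q s x)
      (mul_qHermite hfin s x) (qHermiteInvCoeff_zero_right s hfin)
      (fun _ _ ↦ qHermiteInvCoeff_of_lt s) (qHermiteInvCoeff_succ_succ s hfin) n]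
  refine sum_congr rfl fun k _ ↦ ?_
  simp only [qHermiteInvCoeff, qchoose]
  split_ifs <;> simp
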